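/- For a perfect matching β of [l′+k′] and an (l+k)\n-diagram α, under the canonical isomorphisms (ℝⁿ)^{⊗(k′+k)} ≅ (ℝⁿ)^{⊗k′} ⊗ (ℝⁿ)^{⊗k} and (ℝⁿ)^{⊗(l′+l)} ≅ (ℝⁿ)^{⊗l′} ⊗ (ℝⁿ)^{⊗l}, one has E_β ⊗ H_α = H_{β⊗α}, where β⊗α is the ((l′+l)+(k′+k))\n-diagram obtained by placing the diagram of β to the left of the diagram of α. -/

import Mathlib

/-!
The vertices of `β ⊗ α` are the disjoint union of those of `β` and of `α`, placed by two
order-preserving relabelings, and `F` acts as `f'` on the first part and as `f` on the second.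
Since `β` has no free vertices, the free vertices of `β ⊗ α` are those of `α`, relabeled in an
order-preserving way, so both determinant factors see the same columns. The blocks of size two
of `β ⊗ α` are those of `β` together with those of `α`, so the product of Kronecker deltas
splits, and for a perfect matching that product is exactly the entry of `E_β`.
-/

open Classical
noncomputable section

/-- The matrix `D_π : (ℝⁿ)^{⊗k} → (ℝⁿ)^{⊗l}` associated to a set partition `π` of
`[l+k]` (encoded as a setoid on `Fin (l+k)`, top row first). -/
def Dmat (n l k : ℕ) (π : Setoid (Fin (l + k))) :
    Matrix (Fin l → Fin n) (Fin k → Fin n) ℝ :=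
  Matrix.of fun I J =>
    if ∀ x y, π.r x y → Fin.append I J x = Fin.append I J y then (1 : ℝ) else 0

/-- The set partition whose blocks are the pairs `{x, f x}` of a (fixed-point-free)
involution `f`, i.e. a perfect matching of `Fin N`. -/
def matchingSetoid {N : ℕ} (f : Fin N → Fin N) (hf : ∀ x, f (f x) = x) : Setoid (Fin N) where
  r x y := y = x ∨ y = f x
  iseqv := by
    constructor
    · intro x; exact Or.inl rfl
    · rintro x y (rfl | rfl)
      · exact Or.inl rfl
      · right; rw [hf]
    · rintro x y z (rfl | rfl) h
      · exact h
      · rcases h with rfl | rfl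
        · right; rfl
        · left; rw [hf]

/-- The matrix `H_α : (ℝⁿ)^{⊗k} → (ℝⁿ)^{⊗l}` associated to an `(l+k)\n`-diagram `α`,
encoded by an involution `f` of `Fin (l+k)` whose fixed points (exactly `n` of them)
are the free vertices: the determinant of the matrix whose columns are the standard
basis vectors indexed by the combined tuple at the free vertices (top row increasing,
then bottom row increasing, i.e. increasing order on `Fin (l+k)`), times the product
of Kronecker deltas over the size-two blocks. -/
def Hmat (n l k : ℕ) (f : Fin (l + k) → Fin (l + k))
    (hcard : (Finset.univ.filter (fun x => f x = x)).card = n) :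
    Matrix (Fin l → Fin n) (Fin k → Fin n) ℝ :=
  Matrix.of fun I J =>
    (Matrix.det (Matrix.of fun r c : Fin n =>
      if r = Fin.append I J
        (((Finset.univ.filter (fun x : Fin (l + k) => f x = x)).orderIsoOfFin hcard c : Fin (l + k)))
      then (1 : ℝ) else 0))
    * ∏ x ∈ Finset.univ.filter (fun x : Fin (l + k) => x < f x),
        (if Fin.append I J x = Fin.append I J (f x) then (1 : ℝ) else 0)

/-- The relabeling of the vertex set `[l'+k']` of `β` into the side-by-side vertex set
`[(l'+l)+(k'+k)]`: `x ↦ x` for `x ≤ l'` and `l'+y ↦ (l'+l)+y` for `y ∈ [k']`. -/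
def embLeft (l' k' l k : ℕ) (x : Fin (l' + k')) : Fin ((l' + l) + (k' + k)) :=
  Fin.addCases (motive := fun _ => Fin ((l' + l) + (k' + k)))
    (fun a => Fin.castAdd (k' + k) (Fin.castAdd l a))
    (fun b => Fin.natAdd (l' + l) (Fin.castAdd k b)) x

/-- The relabeling of the vertex set `[l+k]` of `α` into the side-by-side vertex set
`[(l'+l)+(k'+k)]`: `x ↦ l'+x` for `x ≤ l` and `l+y ↦ (l'+l)+k'+y` for `y ∈ [k]`. -/
def embRight (l' k' l k : ℕ) (x : Fin (l + k)) : Fin ((l' + l) + (k' + k)) :=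
  Fin.addCases (motive := fun _ => Fin ((l' + l) + (k' + k)))
    (fun a => Fin.castAdd (k' + k) (Fin.natAdd l' a))
    (fun b => Fin.natAdd (l' + l) (Fin.natAdd k' b)) x

open Finset

section Relabel

variable (l' k' l k : ℕ)

@[simp]
lemma embLeft_castAdd (a : Fin l') :
    embLeft l' k' l k (Fin.castAdd k' a) = Fin.castAdd (k' + k) (Fin.castAdd l a) := by
  simp [embLeft]

@[simp]
lemma embLeft_natAdd (b : Fin k') :
    embLeft l' k' l k (Fin.natAdd l' b) = Fin.natAdd (l' + l) (Fin.castAdd k b) := by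
  simp [embLeft]

@[simp]
lemma embRight_castAdd (a : Fin l) :
    embRight l' k' l k (Fin.castAdd k a) = Fin.castAdd (k' + k) (Fin.natAdd l' a) := by
  simp [embRight]

@[simp]
lemma embRight_natAdd (b : Fin k) :
    embRight l' k' l k (Fin.natAdd l b) = Fin.natAdd (l' + l) (Fin.natAdd k' b) := by
  simp [embRight]

lemma val_embLeft (x : Fin (l' + k')) :
    (embLeft l' k' l k x : ℕ) = if (x : ℕ) < l' then (x : ℕ) else l + x := by
  induction x using Fin.addCases with
  | left a => simp
  | right b => simp; omega

lemma val_embRight (x : Fin (l + k)) :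
    (embRight l' k' l k x : ℕ) = if (x : ℕ) < l then l' + x else l' + k' + x := by
  induction x using Fin.addCases with
  | left a => simp
  | right b => simp; omega

lemma embLeft_strictMono : StrictMono (embLeft l' k' l k) := by
  intro x y h
  rw [Fin.lt_def] at h ⊢
  rw [val_embLeft, val_embLeft]
  split_ifs <;> omega

lemma embRight_strictMono : StrictMono (embRight l' k' l k) := by
  intro x y h
  rw [Fin.lt_def] at h ⊢
  rw [val_embRight, val_embRight]
  split_ifs <;> omega

lemma embLeft_ne_embRight (x : Fin (l' + k')) (y : Fin (l + k)) :
    embLeft l' k' l k x ≠ embRight l' k' l k y := by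
  intro h
  have hx := x.is_lt
  have hy := y.is_lt
  have hval := congrArg Fin.val h
  rw [val_embLeft, val_embRight] at hval
  split_ifs at hval <;> omega

def sideBySideEquiv : Fin (l' + k') ⊕ Fin (l + k) ≃ Fin ((l' + l) + (k' + k)) :=
  Equiv.ofBijective (Sum.elim (embLeft l' k' l k) (embRight l' k' l k)) <|
    (Fintype.bijective_iff_injective_and_card _).mpr
      ⟨(embLeft_strictMono ..).injective.sumElim (embRight_strictMono ..).injective
        (embLeft_ne_embRight l' k' l k), by simp; omega⟩

@[simp]
lemma sideBySideEquiv_inl (x : Fin (l' + k')) :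
    sideBySideEquiv l' k' l k (Sum.inl x) = embLeft l' k' l k x :=
  rfl

@[simp]
lemma sideBySideEquiv_inr (x : Fin (l + k)) :
    sideBySideEquiv l' k' l k (Sum.inr x) = embRight l' k' l k x :=
  rfl

variable {l' k' l k}

lemma append_append_embLeft {n : ℕ} (I' : Fin l' → Fin n) (I : Fin l → Fin n)
    (J' : Fin k' → Fin n) (J : Fin k → Fin n) (x : Fin (l' + k')) :
    Fin.append (Fin.append I' I) (Fin.append J' J) (embLeft l' k' l k x) = Fin.append I' J' x := by
  induction x using Fin.addCases <;> simp

lemma append_append_embRight {n : ℕ} (I' : Fin l' → Fin n) (I : Fin l → Fin n)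
    (J' : Fin k' → Fin n) (J : Fin k → Fin n) (x : Fin (l + k)) :
    Fin.append (Fin.append I' I) (Fin.append J' J) (embRight l' k' l k x) = Fin.append I J x := by
  induction x using Fin.addCases <;> simp

end Relabel

section Pairing

variable {ι κ μ X : Type*}

def pairingDelta [LinearOrder ι] [Fintype ι] [DecidableEq X] (f : ι → ι) (a : ι → X) : ℝ :=
  ∏ x ∈ univ.filter (fun x => x < f x), if a x = a (f x) then 1 else 0

lemma pairingDelta_of_semiconj [LinearOrder ι] [LinearOrder κ] [LinearOrder μ] [Fintype ι]
    [Fintype κ] [Fintype μ] [DecidableEq X] (e : ι ⊕ κ ≃ μ)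
    (he₁ : StrictMono (e ∘ Sum.inl)) (he₂ : StrictMono (e ∘ Sum.inr))
    {f : ι → ι} {g : κ → κ} {F : μ → μ} (hF : ∀ s, F (e s) = e (Sum.map f g s)) (a : μ → X) :
    pairingDelta F a = pairingDelta f (a ∘ e ∘ Sum.inl) * pairingDelta g (a ∘ e ∘ Sum.inr) := by
  have h₁ : ∀ x y, e (Sum.inl x) < e (Sum.inl y) ↔ x < y := fun _ _ => he₁.lt_iff_lt
  have h₂ : ∀ x y, e (Sum.inr x) < e (Sum.inr y) ↔ x < y := fun _ _ => he₂.lt_iff_lt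
  simp only [pairingDelta, prod_filter, ← e.prod_comp, Fintype.prod_sum_type, hF, Sum.map_inl,
    Sum.map_inr, Function.comp_apply, h₁, h₂]
  rfl

lemma filter_fixed_eq_image_inr [Fintype κ] [Fintype μ] [DecidableEq κ] [DecidableEq μ]
    (e : ι ⊕ κ ≃ μ) {f : ι → ι} {g : κ → κ} {F : μ → μ}
    (hF : ∀ s, F (e s) = e (Sum.map f g s)) (hf : ∀ x, f x ≠ x) :
    univ.filter (fun z => F z = z) = (univ.filter (fun y => g y = y)).image (e ∘ Sum.inr) := by
  ext z
  obtain ⟨s, rfl⟩ := e.surjective z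
  cases s <;> simp [hF, hf]

end Pairing

lemma orderIsoOfFin_of_image_eq {α β : Type*} [LinearOrder α] [LinearOrder β] [DecidableEq β]
    {φ : α → β} (hφ : StrictMono φ) {s : Finset α} {t : Finset β} (hst : s.image φ = t) {k : ℕ}
    (hs : s.card = k) (ht : t.card = k) (i : Fin k) :
    (t.orderIsoOfFin ht i : β) = φ (s.orderIsoOfFin hs i) := by
  subst hst
  have huniq := orderEmbOfFin_unique ht
    (fun i => mem_image_of_mem φ (orderEmbOfFin_mem s hs i))
    (hφ.comp (s.orderEmbOfFin hs).strictMono)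
  rw [coe_orderIsoOfFin_apply, coe_orderIsoOfFin_apply, ← congrFun huniq i]

lemma forall_matchingSetoid_iff {N : ℕ} {X : Type*} {f : Fin N → Fin N} (hf : ∀ x, f (f x) = x)
    (a : Fin N → X) :
    (∀ x y, (matchingSetoid f hf).r x y → a x = a y) ↔ ∀ x, x < f x → a x = a (f x) := by
  refine ⟨fun h x _ => h x (f x) (Or.inr rfl), fun h x y hxy => ?_⟩
  obtain rfl | rfl := hxy
  · rfl
  rcases lt_trichotomy x (f x) with hlt | heq | hgt
  · exact h x hlt
  · rw [← heq]
  · have := h (f x) (by rwa [hf])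
    rw [hf] at this
    exact this.symm

lemma Dmat_matchingSetoid_apply {n l k : ℕ} {f : Fin (l + k) → Fin (l + k)}
    (hf : ∀ x, f (f x) = x) (I : Fin l → Fin n) (J : Fin k → Fin n) :
    Dmat n l k (matchingSetoid f hf) I J = pairingDelta f (Fin.append I J) := by
  rw [Dmat, Matrix.of_apply, pairingDelta, prod_boole]
  congr 1
  exact propext ((forall_matchingSetoid_iff hf _).trans (by simp))

/-- `det(e_{v 1} | … | e_{v n})`. -/
def columnDet {n : ℕ} (v : Fin n → Fin n) : ℝ :=
  (Matrix.of fun r c : Fin n => if r = v c then (1 : ℝ) else 0).det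

lemma Hmat_apply {n l k : ℕ} (f : Fin (l + k) → Fin (l + k))
    (hcard : (univ.filter (fun x => f x = x)).card = n) (I : Fin l → Fin n) (J : Fin k → Fin n) :
    Hmat n l k f hcard I J =
      columnDet (fun c => Fin.append I J ((univ.filter (fun x => f x = x)).orderIsoOfFin hcard c)) *
        pairingDelta f (Fin.append I J) :=
  rfl

theorem Ematrix_tensor_Hmat_general (n l' k' l k : ℕ)
    (f' : Fin (l' + k') → Fin (l' + k')) (hf' : ∀ x, f' (f' x) = x) (hf'' : ∀ x, f' x ≠ x)
    (f : Fin (l + k) → Fin (l + k))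
    (hcard : (Finset.univ.filter (fun x => f x = x)).card = n)
    (F : Fin ((l' + l) + (k' + k)) → Fin ((l' + l) + (k' + k)))
    (hF₁ : ∀ x, F (embLeft l' k' l k x) = embLeft l' k' l k (f' x))
    (hF₂ : ∀ x, F (embRight l' k' l k x) = embRight l' k' l k (f x))
    (hFcard : (Finset.univ.filter (fun x => F x = x)).card = n)
    (I' : Fin l' → Fin n) (I : Fin l → Fin n) (J' : Fin k' → Fin n) (J : Fin k → Fin n) :
    Hmat n (l' + l) (k' + k) F hFcard (Fin.append I' I) (Fin.append J' J) =
      Dmat n l' k' (matchingSetoid f' hf') I' J' * Hmat n l k f hcard I J := by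
  have hF : ∀ s, F (sideBySideEquiv l' k' l k s) = sideBySideEquiv l' k' l k (Sum.map f' f s) := by
    rintro (x | x)
    exacts [hF₁ x, hF₂ x]
  have hfree := orderIsoOfFin_of_image_eq (embRight_strictMono l' k' l k)
    (filter_fixed_eq_image_inr _ hF hf'').symm hcard hFcard
  rw [Hmat_apply, Hmat_apply, Dmat_matchingSetoid_apply,
    pairingDelta_of_semiconj (sideBySideEquiv l' k' l k) (embLeft_strictMono ..)
      (embRight_strictMono ..) hF]
  simp only [hfree, Function.comp_def, sideBySideEquiv_inl, sideBySideEquiv_inr, append_append_embLeft,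
    append_append_embRight]
  ring

/-- for a perfect matching `β` of `[l'+k']` (encoded by a fixed-point-free
involution `f'`) and an `(l+k)\n`-diagram `α` (encoded by an involution `f` with exactly
`n` fixed points), with `F` the side-by-side diagram `β ⊗ α` of `[(l'+l)+(k'+k)]`
(characterized by commuting with the two relabelings; it is an `((l'+l)+(k'+k))\n`-diagram),
one has `E_β ⊗ H_α = H_{β⊗α}` under the canonical identifications of tensor powers;
entrywise, `H_{β⊗α}((I',I),(J',J)) = E_β(I',J') · H_α(I,J)`. -/
theorem Ematrix_tensor_Hmat (n l' k' l k : ℕ) (hn : 0 < n)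
    (f' : Fin (l' + k') → Fin (l' + k')) (hf' : ∀ x, f' (f' x) = x) (hf'' : ∀ x, f' x ≠ x)
    (f : Fin (l + k) → Fin (l + k)) (hf : ∀ x, f (f x) = x)
    (hcard : (Finset.univ.filter (fun x => f x = x)).card = n)
    (F : Fin ((l' + l) + (k' + k)) → Fin ((l' + l) + (k' + k)))
    (hF₁ : ∀ x, F (embLeft l' k' l k x) = embLeft l' k' l k (f' x))
    (hF₂ : ∀ x, F (embRight l' k' l k x) = embRight l' k' l k (f x))
    (hFinv : ∀ x, F (F x) = x)
    (hFcard : (Finset.univ.filter (fun x => F x = x)).card = n)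
    (I' : Fin l' → Fin n) (I : Fin l → Fin n) (J' : Fin k' → Fin n) (J : Fin k → Fin n) :
    Hmat n (l' + l) (k' + k) F hFcard (Fin.append I' I) (Fin.append J' J) =
      Dmat n l' k' (matchingSetoid f' hf') I' J' * Hmat n l k f hcard I J :=
  Ematrix_tensor_Hmat_general n l' k' l k f' hf' hf'' f hcard F hF₁ hF₂ hFcard I' I J' J
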